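/- arXiv:2501.04620 — 5 statements merged into one kernel-verified Lean document; each statement's English description precedes it below -/
import Mathlib

section
/- Let m ≤ M be real numbers, let a, b ∈ [m, M], and let κ ∈ [0, (√2−1)/2]. Then (1/2 − κ)(a + b) + (1/4 + κ²)|b − a| + 2κM ≤ M, and (1/2 − κ)(a + b) − (1/4 + κ²)|b − a| + 2κm ≥ m. -/
theorem maxpri_convex_combination_bounds (m M a b κ : ℝ) (hmM : m ≤ M)
    (ha : a ∈ Set.Icc m M) (hb : b ∈ Set.Icc m M)
    (hκ : κ ∈ Set.Icc (0:ℝ) ((Real.sqrt 2 - 1)/2)) :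
    (1/2 - κ) * (a + b) + (1/4 + κ^2) * |b - a| + 2*κ*M ≤ M ∧
    m ≤ (1/2 - κ) * (a + b) - (1/4 + κ^2) * |b - a| + 2*κ*m := by
  obtain ⟨ha1, ha2⟩ := ha
  obtain ⟨hb1, hb2⟩ := hb
  obtain ⟨hκ0, hκ1⟩ := hκ
  have hs : Real.sqrt 2 ^ 2 = 2 := Real.sq_sqrt (by norm_num)
  have hκ2 : 1/4 + κ^2 ≤ 1/2 - κ := by nlinarith [Real.sqrt_nonneg 2]
  rcases abs_cases (b - a) with ⟨h, _⟩ | ⟨h, _⟩ <;> rw [h] <;>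
    constructor <;> nlinarith
end

section
/- Let δ : ℤ → ℝ be a nonnegative sequence with finite support and define s : ℤ → ℝ by s_j = min(δ_{j−1}, δ_j). Then ∑_{j∈ℤ} (s_{j+1} − 2s_j + s_{j−1})² ≤ 2 ∑_{j∈ℤ} (δ_{j+1} − 2δ_j + δ_{j−1})². -/
/-!
Write `g j = δ j - δ (j - 1) = (g j)⁺ - (g j)⁻`. The second difference of `δ` at `j` is
`a j - c j` with `a j = (g (j + 1))⁺ - (g j)⁺` and `c j = (g (j + 1))⁻ - (g j)⁻`, and since
`min (δ (j - 1)) (δ j) = δ (j - 1) - (g j)⁻`, the second difference of `s` at `j` is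
`a (j - 1) - c j`. As `x ↦ x⁺` is monotone and `x ↦ x⁻` antitone, `a j * c j ≤ 0`; hence
`∑ (a (j - 1) - c j)² ≤ 2 ∑ (a j ² + c j ²) ≤ 2 ∑ (a j - c j)²`.
-/

open Filter

theorem posPart_sub_mul_negPart_sub_nonpos {α : Type*} [Ring α] [LinearOrder α] [IsOrderedRing α]
    (x y : α) : (y⁺ - x⁺) * (y⁻ - x⁻) ≤ 0 := by
  rcases le_total x y with h | h
  · exact mul_nonpos_of_nonneg_of_nonpos (sub_nonneg.2 (posPart_mono h))
      (sub_nonpos.2 (negPart_anti h))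
  · exact mul_nonpos_of_nonpos_of_nonneg (sub_nonpos.2 (posPart_mono h))
      (sub_nonneg.2 (negPart_anti h))

theorem tsum_sq_sub_shift_le_two_mul {a c : ℤ → ℝ} (hac : ∀ j, a j * c j ≤ 0)
    (h : Summable fun j => (a j - c j) ^ 2) :
    ∑' j, (a (j - 1) - c j) ^ 2 ≤ 2 * ∑' j, (a j - c j) ^ 2 := by
  have hsq (j : ℤ) : a j ^ 2 + c j ^ 2 ≤ (a j - c j) ^ 2 := by linear_combination 2 * hac j
  have ha : Summable fun j => a j ^ 2 :=
    h.of_nonneg_of_le (fun _ => sq_nonneg _) fun j => by linarith [hsq j, sq_nonneg (c j)]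
  have hc : Summable fun j => c j ^ 2 :=
    h.of_nonneg_of_le (fun _ => sq_nonneg _) fun j => by linarith [hsq j, sq_nonneg (a j)]
  have ha' : Summable fun j => a (j - 1) ^ 2 := (Equiv.subRight (1 : ℤ)).summable_iff.2 ha
  have hshift : ∑' j, a (j - 1) ^ 2 = ∑' j, a j ^ 2 :=
    (Equiv.subRight (1 : ℤ)).tsum_eq fun j => a j ^ 2
  have hbound : Summable fun j => 2 * a (j - 1) ^ 2 + 2 * c j ^ 2 :=
    (ha'.mul_left 2).add (hc.mul_left 2)
  have hsub (j : ℤ) : (a (j - 1) - c j) ^ 2 ≤ 2 * a (j - 1) ^ 2 + 2 * c j ^ 2 := by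
    linear_combination sq_nonneg (a (j - 1) + c j)
  calc ∑' j, (a (j - 1) - c j) ^ 2
      ≤ ∑' j, (2 * a (j - 1) ^ 2 + 2 * c j ^ 2) :=
        (hbound.of_nonneg_of_le (fun _ => sq_nonneg _) hsub).tsum_le_tsum hsub hbound
    _ = 2 * ∑' j, (a j ^ 2 + c j ^ 2) := by
        rw [(ha'.mul_left 2).tsum_add (hc.mul_left 2), tsum_mul_left, tsum_mul_left, hshift,
          ha.tsum_add hc, mul_add]
    _ ≤ 2 * ∑' j, (a j - c j) ^ 2 := by
        gcongr 2 * ?_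
        exact (ha.add hc).tsum_le_tsum hsq h

theorem tsum_sq_second_diff_min_le (δ s : ℤ → ℝ) (hs : ∀ j, s j = min (δ (j - 1)) (δ j))
    (hδ : Summable fun j => (δ (j + 1) - 2 * δ j + δ (j - 1)) ^ 2) :
    ∑' j, (s (j + 1) - 2 * s j + s (j - 1)) ^ 2 ≤
      2 * ∑' j, (δ (j + 1) - 2 * δ j + δ (j - 1)) ^ 2 := by
  set g : ℤ → ℝ := fun j => δ j - δ (j - 1)
  set a : ℤ → ℝ := fun j => (g (j + 1))⁺ - (g j)⁺
  set c : ℤ → ℝ := fun j => (g (j + 1))⁻ - (g j)⁻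
  have hs_negPart (j : ℤ) : s j = δ (j - 1) - (g j)⁻ := by
    rw [hs, ← posPart_neg, neg_sub, ← inf_eq_sub_posPart_sub]
  have hδ_eq (j : ℤ) : δ (j + 1) - 2 * δ j + δ (j - 1) = a j - c j := by
    have h₁ := posPart_sub_negPart (g (j + 1))
    have h₀ := posPart_sub_negPart (g j)
    simp only [a, c, g, add_sub_cancel_right] at h₁ h₀ ⊢
    linarith
  have hs_eq (j : ℤ) : s (j + 1) - 2 * s j + s (j - 1) = a (j - 1) - c j := by
    have h := hδ_eq (j - 1)
    rw [hs_negPart (j + 1), hs_negPart j, hs_negPart (j - 1)]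
    simp only [a, c, sub_add_cancel, add_sub_cancel_right] at h ⊢
    linarith
  simp only [hδ_eq, hs_eq] at hδ ⊢
  exact tsum_sq_sub_shift_le_two_mul (fun j => posPart_sub_mul_negPart_sub_nonpos _ _) hδ

theorem summable_sq_second_diff_of_finite_support {δ : ℤ → ℝ}
    (hfin : (Function.support δ).Finite) :
    Summable fun j => (δ (j + 1) - 2 * δ j + δ (j - 1)) ^ 2 := by
  have hδ : ∀ᶠ j in cofinite, δ j = 0 := hfin
  have hshift (k : ℤ) : ∀ᶠ j in cofinite, δ (j + k) = 0 :=
    (add_left_injective k).tendsto_cofinite.eventually hδ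
  apply summable_of_hasFiniteSupport
  change ∀ᶠ j in cofinite, _ = 0
  filter_upwards [hshift 1, hδ, hshift (-1)] with j h₁ h₀ hm₁
  rw [← sub_eq_add_neg] at hm₁
  simp [h₁, h₀, hm₁]

theorem second_difference_min_estimate_general (δ : ℤ → ℝ)
    (hfin : (Function.support δ).Finite)
    (s : ℤ → ℝ) (hs : ∀ j, s j = min (δ (j - 1)) (δ j)) :
    ∑' j : ℤ, (s (j + 1) - 2 * s j + s (j - 1))^2 ≤
      2 * ∑' j : ℤ, (δ (j + 1) - 2 * δ j + δ (j - 1))^2 :=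
  tsum_sq_second_diff_min_le δ s hs (summable_sq_second_diff_of_finite_support hfin)

theorem second_difference_min_estimate (δ : ℤ → ℝ) (hnn : ∀ j, 0 ≤ δ j)
    (hfin : (Function.support δ).Finite)
    (s : ℤ → ℝ) (hs : ∀ j, s j = min (δ (j - 1)) (δ j)) :
    ∑' j : ℤ, (s (j + 1) - 2 * s j + s (j - 1))^2 ≤
      2 * ∑' j : ℤ, (δ (j + 1) - 2 * δ j + δ (j - 1))^2 :=
  second_difference_min_estimate_general δ hfin s hs
end

section
/- Let x, y ∈ [0,1], t = y − x, θ ∈ [0,1], and let b be a real number with |b| ≤ 1/2 − θ/16. Then 1 − (θ/16)t² − b·t − (x + y)/2 ≥ 0. -/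
theorem eta_coefficient_nonneg (x y t θ b : ℝ)
    (hx : x ∈ Set.Icc (0:ℝ) 1) (hy : y ∈ Set.Icc (0:ℝ) 1)
    (ht : t = y - x) (hθ : θ ∈ Set.Icc (0:ℝ) 1)
    (hb : |b| ≤ 1/2 - θ/16) :
    0 ≤ 1 - θ/16 * t^2 - b * t - (x + y)/2 := by
  obtain ⟨hx0, hx1⟩ := hx
  obtain ⟨hy0, hy1⟩ := hy
  obtain ⟨hθ0, hθ1⟩ := hθ
  obtain ⟨hb1, hb2⟩ := abs_le.mp hb
  subst ht
  rcases le_total x y with h | h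
  · have t0 : 0 ≤ y - x := by linarith
    have t1 : y - x ≤ 1 := by linarith
    nlinarith [mul_nonneg (mul_nonneg hθ0 t0) (sub_nonneg.mpr t1),
      mul_le_mul_of_nonneg_right hb2 t0]
  · have t0 : 0 ≤ x - y := by linarith
    have t1 : x - y ≤ 1 := by linarith
    nlinarith [mul_nonneg (mul_nonneg hθ0 t0) (sub_nonneg.mpr t1),
      mul_le_mul_of_nonneg_right hb1 t0]
end

section
/- Let δ : ℤ → ℝ have finite support and let α : ℤ → ℝ be bounded. Then ∑_{j∈ℤ} δ_j² − ∑_{j∈ℤ} (α_{j−1}δ_{j−1} + (1 − α_j)δ_j)² = ∑_{j∈ℤ} α_{j−1}(1 − α_j)(δ_j − δ_{j−1})² + ∑_{j∈ℤ} (α_j − α_{j−1})·(α_{j−1}δ_{j−1}² + (1 − α_j)δ_j²). -/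
theorem jump_energy_identity (δ α : ℤ → ℝ) (hfin : (Function.support δ).Finite)
    (hbd : ∃ B, ∀ j, |α j| ≤ B) :
    ∑' j : ℤ, (δ j)^2
      - ∑' j : ℤ, (α (j - 1) * δ (j - 1) + (1 - α j) * δ j)^2
    = ∑' j : ℤ, α (j - 1) * (1 - α j) * (δ j - δ (j - 1))^2
      + ∑' j : ℤ, (α j - α (j - 1)) * (α (j - 1) * (δ (j - 1))^2 + (1 - α j) * (δ j)^2) := by
  classical
  set h : ℤ → ℝ := fun j => α j * (δ j)^2 with hh
  set F : Finset ℤ := hfin.toFinset ∪ hfin.toFinset.image (· + 1) with hF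
  have hzero : ∀ j ∉ F, δ j = 0 ∧ δ (j - 1) = 0 := by
    intro j hj
    simp only [hF, Finset.mem_union, Finset.mem_image, Set.Finite.mem_toFinset,
      Function.mem_support, not_or, not_exists, not_and] at hj
    refine ⟨by_contra fun hd => hj.1 hd, ?_⟩
    by_contra hd
    exact hj.2 (j - 1) hd (by ring)
  have e1 : ∑' j : ℤ, (δ j)^2 = ∑ j ∈ F, (δ j)^2 :=
    tsum_eq_sum (fun j hj => by rw [(hzero j hj).1]; ring)
  have e2 : ∑' j : ℤ, (α (j - 1) * δ (j - 1) + (1 - α j) * δ j)^2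
      = ∑ j ∈ F, (α (j - 1) * δ (j - 1) + (1 - α j) * δ j)^2 :=
    tsum_eq_sum (fun j hj => by rw [(hzero j hj).1, (hzero j hj).2]; ring)
  have e3 : ∑' j : ℤ, α (j - 1) * (1 - α j) * (δ j - δ (j - 1))^2
      = ∑ j ∈ F, α (j - 1) * (1 - α j) * (δ j - δ (j - 1))^2 :=
    tsum_eq_sum (fun j hj => by rw [(hzero j hj).1, (hzero j hj).2]; ring)
  have e4 : ∑' j : ℤ, (α j - α (j - 1)) * (α (j - 1) * (δ (j - 1))^2 + (1 - α j) * (δ j)^2)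
      = ∑ j ∈ F, (α j - α (j - 1)) * (α (j - 1) * (δ (j - 1))^2 + (1 - α j) * (δ j)^2) :=
    tsum_eq_sum (fun j hj => by rw [(hzero j hj).1, (hzero j hj).2]; ring)
  have eH : ∑' j : ℤ, h j = ∑ j ∈ F, h j :=
    tsum_eq_sum (fun j hj => by simp only [hh]; rw [(hzero j hj).1]; ring)
  have eH' : ∑' j : ℤ, h (j - 1) = ∑ j ∈ F, h (j - 1) :=
    tsum_eq_sum (fun j hj => by simp only [hh]; rw [(hzero j hj).2]; ring)
  have eshift : ∑' j : ℤ, h (j - 1) = ∑' j : ℤ, h j := (Equiv.subRight (1 : ℤ)).tsum_eq h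
  have hHH : ∑ j ∈ F, h (j - 1) = ∑ j ∈ F, h j := by rw [← eH', eshift, eH]
  rw [e1, e2, e3, e4]
  have key : ∀ j ∈ F, (δ j)^2 - (α (j - 1) * δ (j - 1) + (1 - α j) * δ j)^2
      = α (j - 1) * (1 - α j) * (δ j - δ (j - 1))^2
        + (α j - α (j - 1)) * (α (j - 1) * (δ (j - 1))^2 + (1 - α j) * (δ j)^2)
        + (h j - h (j - 1)) := by
    intro j _
    simp only [hh]
    ring
  calc ∑ j ∈ F, (δ j)^2 - ∑ j ∈ F, (α (j - 1) * δ (j - 1) + (1 - α j) * δ j)^2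
      = ∑ j ∈ F, (α (j - 1) * (1 - α j) * (δ j - δ (j - 1))^2
          + (α j - α (j - 1)) * (α (j - 1) * (δ (j - 1))^2 + (1 - α j) * (δ j)^2)
          + (h j - h (j - 1))) := by
        rw [← Finset.sum_sub_distrib]; exact Finset.sum_congr rfl key
    _ = ∑ j ∈ F, α (j - 1) * (1 - α j) * (δ j - δ (j - 1))^2
          + ∑ j ∈ F, (α j - α (j - 1)) * (α (j - 1) * (δ (j - 1))^2 + (1 - α j) * (δ j)^2)
          + (∑ j ∈ F, h j - ∑ j ∈ F, h (j - 1)) := by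
        rw [Finset.sum_add_distrib, Finset.sum_add_distrib, Finset.sum_sub_distrib]
    _ = _ := by rw [hHH]; ring
end

section
/- Let m ≤ M, and let f : ℝ × ℝ → ℝ satisfy: (i) |∂_u f(k, u)| ≤ L for all k, u; (ii) f(k₁, M) = f(k₂, M) and f(k₁, m) = f(k₂, m) for all k₁, k₂. Let λ > 0 and κ = λL, and assume κ ≤ (√2 − 1)/2. Let u_j, u_{j+1} ∈ [m, M], k_j, k_{j+1} ∈ ℝ, and let σ_j, σ_{j+1} be real numbers with |σ_j| ≤ |u_{j+1} − u_j|, |σ_{j+1}| ≤ |u_{j+1} − u_j| and |σ_{j+1} − σ_j| ≤ 2|u_{j+1} − u_j|. Define mid-values u_i^{1/2} = u_i − (λ/2)∂_u f(k_i, u_i)σ_i for i = j, j+1, and the staggered update u' = (u_j + u_{j+1})/2 − (1/8)(σ_{j+1} − σ_j) − λ(f(k_{j+1}, u_{j+1}^{1/2}) − f(k_j, u_j^{1/2})). Then m ≤ u' ≤ M. -/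
set_option maxHeartbeats 1000000 in
theorem discrete_maximum_principle_one_step (m M L lam : ℝ) (f fu : ℝ → ℝ → ℝ)
    (hmM : m ≤ M)
    (hderiv : ∀ k u, HasDerivAt (f k) (fu k u) u)
    (hL : ∀ k u, |fu k u| ≤ L)
    (hfluxM : ∀ k₁ k₂, f k₁ M = f k₂ M)
    (hfluxm : ∀ k₁ k₂, f k₁ m = f k₂ m)
    (hlam : 0 < lam)
    (hCFL : lam * L ≤ (Real.sqrt 2 - 1)/2)
    (uj ujp kj kjp σj σjp : ℝ)
    (huj : uj ∈ Set.Icc m M) (hujp : ujp ∈ Set.Icc m M)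
    (hσj : |σj| ≤ |ujp - uj|) (hσjp : |σjp| ≤ |ujp - uj|)
    (hσdiff : |σjp - σj| ≤ 2 * |ujp - uj|) :
    (uj + ujp)/2 - (σjp - σj)/8
      - lam * (f kjp (ujp - lam/2 * fu kjp ujp * σjp)
               - f kj (uj - lam/2 * fu kj uj * σj))
      ∈ Set.Icc m M := by
  obtain ⟨hmj, hjM⟩ := huj
  obtain ⟨hmjp, hjpM⟩ := hujp
  have hL0 : 0 ≤ L := le_trans (abs_nonneg _) (hL 0 0)
  have hκ0 : 0 ≤ lam * L := mul_nonneg hlam.le hL0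
  -- κ + κ² ≤ 1/4
  have hsq : (lam * L)^2 ≤ ((Real.sqrt 2 - 1)/2)^2 := pow_le_pow_left₀ hκ0 hCFL 2
  have h2 : (Real.sqrt 2)^2 = 2 := Real.sq_sqrt (by norm_num)
  have hκ2 : lam * L + (lam * L)^2 ≤ 1/4 := by nlinarith [hsq, hCFL, h2]
  have hκhalf : lam * L ≤ 1/2 := by nlinarith [sq_nonneg (lam * L)]
  -- Lipschitz bound
  have lip : ∀ k x y, |f k x - f k y| ≤ L * |x - y| := by
    intro k x y
    have := Convex.norm_image_sub_le_of_norm_hasDerivWithin_le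
      (f := f k) (f' := fu k) (C := L) (s := Set.univ)
      (fun z _ => (hderiv k z).hasDerivWithinAt)
      (fun z _ => hL k z) convex_univ (Set.mem_univ y) (Set.mem_univ x)
    simpa [Real.norm_eq_abs] using this
  set t := |ujp - uj| with htdef
  have ht0 : 0 ≤ t := abs_nonneg _
  set vj := uj - lam/2 * fu kj uj * σj with hvj
  set vjp := ujp - lam/2 * fu kjp ujp * σjp with hvjp
  -- midpoint perturbation bounds
  have hmidj : |vj - uj| ≤ lam * L / 2 * t := by
    have : vj - uj = -(lam/2 * fu kj uj * σj) := by rw [hvj]; ring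
    rw [this, abs_neg, abs_mul, abs_mul, abs_of_pos (by positivity : (0:ℝ) < lam/2)]
    calc lam/2 * |fu kj uj| * |σj| ≤ lam/2 * L * t :=
          mul_le_mul (mul_le_mul_of_nonneg_left (hL kj uj) (by positivity))
            hσj (abs_nonneg _) (mul_nonneg (by positivity) hL0)
      _ = lam * L / 2 * t := by ring
  have hmidjp : |vjp - ujp| ≤ lam * L / 2 * t := by
    have : vjp - ujp = -(lam/2 * fu kjp ujp * σjp) := by rw [hvjp]; ring
    rw [this, abs_neg, abs_mul, abs_mul, abs_of_pos (by positivity : (0:ℝ) < lam/2)]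
    calc lam/2 * |fu kjp ujp| * |σjp| ≤ lam/2 * L * t :=
          mul_le_mul (mul_le_mul_of_nonneg_left (hL kjp ujp) (by positivity))
            hσjp (abs_nonneg _) (mul_nonneg (by positivity) hL0)
      _ = lam * L / 2 * t := by ring
  have hvjM : |vj - M| ≤ (M - uj) + lam * L / 2 * t := by
    calc |vj - M| = |(vj - uj) + (uj - M)| := by ring_nf
      _ ≤ |vj - uj| + |uj - M| := abs_add_le _ _
      _ ≤ lam * L / 2 * t + (M - uj) := by
          have : |uj - M| = M - uj := by rw [abs_sub_comm]; exact abs_of_nonneg (by linarith)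
          linarith [hmidj]
      _ = (M - uj) + lam * L / 2 * t := by ring
  have hvjpM : |vjp - M| ≤ (M - ujp) + lam * L / 2 * t := by
    calc |vjp - M| = |(vjp - ujp) + (ujp - M)| := by ring_nf
      _ ≤ |vjp - ujp| + |ujp - M| := abs_add_le _ _
      _ ≤ lam * L / 2 * t + (M - ujp) := by
          have : |ujp - M| = M - ujp := by rw [abs_sub_comm]; exact abs_of_nonneg (by linarith)
          linarith [hmidjp]
      _ = (M - ujp) + lam * L / 2 * t := by ring
  have hvjm : |vj - m| ≤ (uj - m) + lam * L / 2 * t := by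
    calc |vj - m| = |(vj - uj) + (uj - m)| := by ring_nf
      _ ≤ |vj - uj| + |uj - m| := abs_add_le _ _
      _ ≤ lam * L / 2 * t + (uj - m) := by
          have : |uj - m| = uj - m := abs_of_nonneg (by linarith)
          linarith [hmidj]
      _ = (uj - m) + lam * L / 2 * t := by ring
  have hvjpm : |vjp - m| ≤ (ujp - m) + lam * L / 2 * t := by
    calc |vjp - m| = |(vjp - ujp) + (ujp - m)| := by ring_nf
      _ ≤ |vjp - ujp| + |ujp - m| := abs_add_le _ _
      _ ≤ lam * L / 2 * t + (ujp - m) := by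
          have : |ujp - m| = ujp - m := abs_of_nonneg (by linarith)
          linarith [hmidjp]
      _ = (ujp - m) + lam * L / 2 * t := by ring
  -- flux difference bounds
  have hA_M : |f kjp vjp - f kj vj| ≤ L * (2*M - uj - ujp) + L * (lam * L) * t := by
    have e : f kjp vjp - f kj vj = (f kjp vjp - f kjp M) + (f kj M - f kj vj) := by
      rw [hfluxM kjp kj]; ring
    calc |f kjp vjp - f kj vj| ≤ |f kjp vjp - f kjp M| + |f kj M - f kj vj| := by
          rw [e]; exact abs_add_le _ _
      _ ≤ L * |vjp - M| + L * |vj - M| := by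
          refine add_le_add (lip kjp vjp M) ?_
          rw [abs_sub_comm] at *; exact lip kj vj M
      _ ≤ L * ((M - ujp) + lam * L / 2 * t) + L * ((M - uj) + lam * L / 2 * t) := by
          gcongr
      _ = L * (2*M - uj - ujp) + L * (lam * L) * t := by ring
  have hA_m : |f kjp vjp - f kj vj| ≤ L * (uj + ujp - 2*m) + L * (lam * L) * t := by
    have e : f kjp vjp - f kj vj = (f kjp vjp - f kjp m) + (f kj m - f kj vj) := by
      rw [hfluxm kjp kj]; ring
    calc |f kjp vjp - f kj vj| ≤ |f kjp vjp - f kjp m| + |f kj m - f kj vj| := by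
          rw [e]; exact abs_add_le _ _
      _ ≤ L * |vjp - m| + L * |vj - m| := by
          refine add_le_add (lip kjp vjp m) ?_
          rw [abs_sub_comm] at *; exact lip kj vj m
      _ ≤ L * ((ujp - m) + lam * L / 2 * t) + L * ((uj - m) + lam * L / 2 * t) := by
          gcongr
      _ = L * (uj + ujp - 2*m) + L * (lam * L) * t := by ring
  have hlamA_M : |lam * (f kjp vjp - f kj vj)| ≤
      lam * L * (2*M - uj - ujp) + (lam*L)^2 * t := by
    rw [abs_mul, abs_of_pos hlam]
    calc lam * |f kjp vjp - f kj vj|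
        ≤ lam * (L * (2*M - uj - ujp) + L * (lam * L) * t) :=
          mul_le_mul_of_nonneg_left hA_M hlam.le
      _ = lam * L * (2*M - uj - ujp) + (lam*L)^2 * t := by ring
  have hlamA_m : |lam * (f kjp vjp - f kj vj)| ≤
      lam * L * (uj + ujp - 2*m) + (lam*L)^2 * t := by
    rw [abs_mul, abs_of_pos hlam]
    calc lam * |f kjp vjp - f kj vj|
        ≤ lam * (L * (uj + ujp - 2*m) + L * (lam * L) * t) :=
          mul_le_mul_of_nonneg_left hA_m hlam.le
      _ = lam * L * (uj + ujp - 2*m) + (lam*L)^2 * t := by ring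
  obtain ⟨hM1, hM2⟩ := abs_le.mp hlamA_M
  obtain ⟨hm1, hm2⟩ := abs_le.mp hlamA_m
  obtain ⟨hD1, hD2⟩ := abs_le.mp hσdiff
  have h14 : 0 ≤ 1/4 - lam*L - (lam*L)^2 := by linarith
  have h12 : 0 ≤ 1/2 - lam*L := by linarith
  obtain ⟨κ, hκeq⟩ : ∃ κ, lam * L = κ := ⟨_, rfl⟩
  rw [hκeq] at hM1 hM2 hm1 hm2 hκ0 h14 h12
  obtain ⟨A, hAeq⟩ : ∃ A, lam * (f kjp vjp - f kj vj) = A := ⟨_, rfl⟩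
  rw [hAeq] at hM1 hM2 hm1 hm2 ⊢
  clear hderiv lip hA_M hA_m hlamA_M hlamA_m hmidj hmidjp hvjM hvjpM hvjm hvjpm
    hL hfluxM hfluxm hCFL hsq h2 hσj hσjp hσdiff hκ2 hκhalf hκeq hAeq hvj hvjp
  clear_value t vj vjp
  clear vj vjp
  constructor
  · clear hM1 hM2
    rcases abs_cases (ujp - uj) with ⟨he, hge⟩ | ⟨he, hge⟩ <;> rw [← htdef] at he <;> subst he
    · nlinarith [mul_nonneg h12 (sub_nonneg.mpr hmj), mul_nonneg h14 ht0]
    · nlinarith [mul_nonneg h12 (sub_nonneg.mpr hmjp), mul_nonneg h14 ht0]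
  · clear hm1 hm2
    rcases abs_cases (ujp - uj) with ⟨he, hge⟩ | ⟨he, hge⟩ <;> rw [← htdef] at he <;> subst he
    · nlinarith [mul_nonneg h12 (sub_nonneg.mpr hjpM), mul_nonneg h14 ht0]
    · nlinarith [mul_nonneg h12 (sub_nonneg.mpr hjM), mul_nonneg h14 ht0]
end
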